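/- arXiv:2304.13470 — 3 statements merged into one kernel-verified Lean document; each statement's English description precedes it below -/
import Mathlib

section
/- Let C and D be C*-2-categories with D locally orthogonal projection complete. Then Fun(C,D) is locally orthogonal projection complete. More precisely: let F, G : C → D be *-2-functors, φ : F ⇒ G a *-2-transformation, and p : φ ⇛ φ a 2-modification with p_a² = p_a* = p_a for all 0-cells a. Choose, for each a, a 1-cell x_a ∈ D₁(F(a),G(a)) and an isometry ι_a ∈ D₂(x_a, φ_a) with ι_a* ι_a = id_{x_a} and ι_a ι_a* = p_a, and set x_X := (id_{G(X)} ⊠ ι_a*) ∘ φ_X ∘ (ι_b ⊠ id_{F(X)}) for each 1-cell X ∈ C₁(a,b). Then each x_X is unitary, x = (x_a, x_X) is a *-2-transformation F ⇒ G, and ι = (ι_a) is a 2-modification x ⇛ φ satisfying ι ∘ ι* = p and ι* ∘ ι = id_x. -/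
/-!
Self-contained background for formalizing results from
"Q-system completion of C*-2-categories of 2-functors".

We model a strict C*-2-category as a (Mathlib) bicategory which is `Bicategory.Strict`,
together with a `CStarStruct`: a star operation and a norm on 2-cells, compatible with
the vertical composition and the horizontal whiskerings.
-/

open CategoryTheory CategoryTheory.Bicategory

universe w₁ v₁ u₁ w₂ v₂ u₂

/-- A C*-structure on a bicategory: each hom-category is a C*-category.  We record the
star operation and the norm on 2-cells together with their compatibilities. -/
class CStarStruct (B : Type u₁) [Bicategory.{w₁, v₁} B] where
  star : ∀ {a b : B} {f g : a ⟶ b}, (f ⟶ g) → (g ⟶ f)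
  nrm : ∀ {a b : B} {f g : a ⟶ b}, (f ⟶ g) → ℝ
  star_star : ∀ {a b : B} {f g : a ⟶ b} (η : f ⟶ g), star (star η) = η
  star_id : ∀ {a b : B} (f : a ⟶ b), star (𝟙 f) = 𝟙 f
  star_comp : ∀ {a b : B} {f g h : a ⟶ b} (η : f ⟶ g) (θ : g ⟶ h),
    star (η ≫ θ) = star θ ≫ star η
  star_whiskerLeft : ∀ {a b c : B} (f : a ⟶ b) {g h : b ⟶ c} (η : g ⟶ h),
    star (f ◁ η) = f ◁ star η
  star_whiskerRight : ∀ {a b c : B} {f g : a ⟶ b} (η : f ⟶ g) (h : b ⟶ c),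
    star (η ▷ h) = star η ▷ h
  nrm_nonneg : ∀ {a b : B} {f g : a ⟶ b} (η : f ⟶ g), 0 ≤ nrm η
  nrm_star : ∀ {a b : B} {f g : a ⟶ b} (η : f ⟶ g), nrm (star η) = nrm η
  nrm_comp_le : ∀ {a b : B} {f g h : a ⟶ b} (η : f ⟶ g) (θ : g ⟶ h),
    nrm (η ≫ θ) ≤ nrm η * nrm θ
  nrm_cstar : ∀ {a b : B} {f g : a ⟶ b} (η : f ⟶ g),
    nrm (η ≫ star η) = nrm η * nrm η

section Basics

variable {B : Type u₁} [Bicategory.{w₁, v₁} B] [CStarStruct B]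

/-- The star (adjoint) of a 2-cell. -/
abbrev star2 {a b : B} {f g : a ⟶ b} (η : f ⟶ g) : g ⟶ f := CStarStruct.star η

/-- The norm of a 2-cell. -/
abbrev norm2 {a b : B} {f g : a ⟶ b} (η : f ⟶ g) : ℝ := CStarStruct.nrm η

/-- A 2-cell `u : f ⟶ g` is unitary if `u u* = id` and `u* u = id`
(composites written diagrammatically). -/
def IsUnitary {a b : B} {f g : a ⟶ b} (u : f ⟶ g) : Prop :=
  u ≫ star2 u = 𝟙 f ∧ star2 u ≫ u = 𝟙 g

/-- A projection 2-cell: `p² = p = p*`. -/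
def IsProjection {a b : B} {f : a ⟶ b} (p : f ⟶ f) : Prop :=
  p ≫ p = p ∧ star2 p = p

end Basics

/-- A C*-2-category is locally orthogonal projection complete if every projection
2-cell `p` on a 1-cell `f` splits as `p = v v*` with `v` an isometry (`v* v = id`). -/
def LocProjComplete (B : Type u₁) [Bicategory.{w₁, v₁} B] [CStarStruct B] : Prop :=
  ∀ {a b : B} (f : a ⟶ b) (p : f ⟶ f), IsProjection p →
    ∃ (g : a ⟶ b) (v : g ⟶ f), v ≫ star2 v = 𝟙 g ∧ star2 v ≫ v = p

section QSystems

variable {B : Type u₁} [Bicategory.{w₁, v₁} B] [CStarStruct B]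

/-- The Q-system axioms for a 1-cell `Q : b ⟶ b` with multiplication `m` and unit `i`:
associativity, (left and right) unitality, the Frobenius condition (both versions)
and separability. -/
def IsQSystem {b : B} (Q : b ⟶ b) (m : Q ≫ Q ⟶ Q) (i : 𝟙 b ⟶ Q) : Prop :=
  ((m ▷ Q) ≫ m = (α_ Q Q Q).hom ≫ (Q ◁ m) ≫ m) ∧
  ((i ▷ Q) ≫ m = (λ_ Q).hom) ∧
  ((Q ◁ i) ≫ m = (ρ_ Q).hom) ∧
  (m ≫ star2 m = (star2 m ▷ Q) ≫ (α_ Q Q Q).hom ≫ (Q ◁ m)) ∧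
  (m ≫ star2 m = (Q ◁ star2 m) ≫ (α_ Q Q Q).inv ≫ (m ▷ Q)) ∧
  (star2 m ≫ m = 𝟙 Q)

/-- `(x, xb)` is a dual pair with evaluation `ε` and coevaluation `η` satisfying the
zig-zag identities, and the duality is unitarily separable: `ε ∘ ε* = id`. -/
def IsUnitarySepDual {e c : B} (x : e ⟶ c) (xb : c ⟶ e)
    (eps : xb ≫ x ⟶ 𝟙 c) (η : 𝟙 e ⟶ x ≫ xb) : Prop :=
  ((λ_ x).inv ≫ (η ▷ x) ≫ (α_ x xb x).hom ≫ (x ◁ eps) ≫ (ρ_ x).hom = 𝟙 x) ∧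
  ((ρ_ xb).inv ≫ (xb ◁ η) ≫ (α_ xb x xb).inv ≫ (eps ▷ xb) ≫ (λ_ xb).hom = 𝟙 xb) ∧
  (star2 eps ≫ eps = 𝟙 (𝟙 c))

/-- The canonical multiplication `id ⊠ ε ⊠ id` on the 1-cell `x ≫ xb` determined
by a dual pair. -/
def dualMult {e c : B} (x : e ⟶ c) (xb : c ⟶ e) (eps : xb ≫ x ⟶ 𝟙 c) :
    (x ≫ xb) ≫ (x ≫ xb) ⟶ x ≫ xb :=
  (α_ x xb (x ≫ xb)).hom ≫ (x ◁ ((α_ xb x xb).inv ≫ (eps ▷ xb) ≫ (λ_ xb).hom))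

/-- The canonical comultiplication `id ⊠ ε* ⊠ id` on the 1-cell `x ≫ xb` determined
by a dual pair. -/
def comultOf {e c : B} (x : e ⟶ c) (xb : c ⟶ e) (eps : xb ≫ x ⟶ 𝟙 c) :
    x ≫ xb ⟶ (x ≫ xb) ≫ (x ≫ xb) :=
  (x ◁ ((λ_ xb).inv ≫ (star2 eps ▷ xb) ≫ (α_ xb x xb).hom)) ≫ (α_ x xb (x ≫ xb)).inv

/-- `u` is an isomorphism of Q-systems `(Q, m, i) ≅ (Q', m', i')`: a unitary 2-cell
intertwining the multiplications and the units. -/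
def IsQSysIso {b : B} {Q Q' : b ⟶ b} (m : Q ≫ Q ⟶ Q) (i : 𝟙 b ⟶ Q)
    (m' : Q' ≫ Q' ⟶ Q') (i' : 𝟙 b ⟶ Q') (u : Q ⟶ Q') : Prop :=
  IsUnitary u ∧ (m ≫ u = ((u ▷ Q) ≫ (Q' ◁ u)) ≫ m') ∧ (i ≫ u = i')

/-- A Q-system `(Q, m, i)` splits if it is isomorphic, as a Q-system, to `X ⊠ X̄`
for a 1-cell `X` admitting a unitarily separable dual. -/
def QSystemSplits {b : B} (Q : b ⟶ b) (m : Q ≫ Q ⟶ Q) (i : 𝟙 b ⟶ Q) : Prop :=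
  ∃ (c : B) (x : b ⟶ c) (xb : c ⟶ b) (eps : xb ≫ x ⟶ 𝟙 c) (η : 𝟙 b ⟶ x ≫ xb),
    IsUnitarySepDual x xb eps η ∧
    ∃ u : Q ⟶ x ≫ xb, IsQSysIso m i (dualMult x xb eps) η u

end QSystems

/-- A C*-2-category is Q-system complete iff every Q-system in it splits
(by [CPJP, Theorem 3.36] this is equivalent to the canonical inclusion into the
Q-system completion being a *-equivalence). -/
def QSystemComplete (B : Type u₁) [Bicategory.{w₁, v₁} B] [CStarStruct B] : Prop :=
  ∀ (b : B) (Q : b ⟶ b) (m : Q ≫ Q ⟶ Q) (i : 𝟙 b ⟶ Q),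
    IsQSystem Q m i → QSystemSplits Q m i

/-! ### The C*-2-category `Fun(C, D)` of *-2-functors -/

/-- The data of a 2-functor between bicategories: action on 0-, 1-, 2-cells,
tensorators and unitors. -/
structure TwoFunctorData (C : Type u₁) (D : Type u₂)
    [Bicategory.{w₁, v₁} C] [Bicategory.{w₂, v₂} D] where
  obj : C → D
  map : ∀ {a b : C}, (a ⟶ b) → (obj a ⟶ obj b)
  map2 : ∀ {a b : C} {X Y : a ⟶ b}, (X ⟶ Y) → (map X ⟶ map Y)
  tensorator : ∀ {a b c : C} (X : a ⟶ b) (Y : b ⟶ c), map X ≫ map Y ⟶ map (X ≫ Y)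
  unitor : ∀ a : C, 𝟙 (obj a) ⟶ map (𝟙 a)

section Fun

variable {C : Type u₁} {D : Type u₂}
variable [Bicategory.{w₁, v₁} C] [Bicategory.Strict C] [CStarStruct C]
variable [Bicategory.{w₂, v₂} D] [Bicategory.Strict D] [CStarStruct D]

/-- `F` is a *-2-functor: functorial on hom-categories, star-preserving, with unitary
natural tensorators and unitors satisfying the associativity and unitality coherences. -/
def IsStarTwoFunctor (F : TwoFunctorData C D) : Prop :=
  (∀ {a b : C} (X : a ⟶ b), F.map2 (𝟙 X) = 𝟙 (F.map X)) ∧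
  (∀ {a b : C} {X Y Z : a ⟶ b} (f : X ⟶ Y) (g : Y ⟶ Z),
      F.map2 (f ≫ g) = F.map2 f ≫ F.map2 g) ∧
  (∀ {a b : C} {X Y : a ⟶ b} (f : X ⟶ Y), F.map2 (star2 f) = star2 (F.map2 f)) ∧
  (∀ {a b c : C} (X : a ⟶ b) (Y : b ⟶ c), IsUnitary (F.tensorator X Y)) ∧
  (∀ a : C, IsUnitary (F.unitor a)) ∧
  (∀ {a b c : C} {X X' : a ⟶ b} {Y Y' : b ⟶ c} (f : X ⟶ X') (g : Y ⟶ Y'),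
      ((F.map2 f ▷ F.map Y) ≫ (F.map X' ◁ F.map2 g)) ≫ F.tensorator X' Y'
        = F.tensorator X Y ≫ F.map2 ((f ▷ Y) ≫ (X' ◁ g))) ∧
  (∀ {a b c d : C} (X : a ⟶ b) (Y : b ⟶ c) (Z : c ⟶ d),
      (F.tensorator X Y ▷ F.map Z) ≫ F.tensorator (X ≫ Y) Z ≫ F.map2 (α_ X Y Z).hom
        = (α_ (F.map X) (F.map Y) (F.map Z)).hom ≫ (F.map X ◁ F.tensorator Y Z)
            ≫ F.tensorator X (Y ≫ Z)) ∧
  (∀ {a b : C} (X : a ⟶ b),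
      (F.unitor a ▷ F.map X) ≫ F.tensorator (𝟙 a) X ≫ F.map2 (λ_ X).hom
        = (λ_ (F.map X)).hom) ∧
  (∀ {a b : C} (X : a ⟶ b),
      (F.map X ◁ F.unitor b) ≫ F.tensorator X (𝟙 b) ≫ F.map2 (ρ_ X).hom
        = (ρ_ (F.map X)).hom)

/-- The data of a 2-transformation `φ : F ⇒ G`: 1-cells `φ_a : F(a) ⟶ G(a)` and
2-cells `φ_X : F(X) ⊠ φ_b ⟶ φ_a ⊠ G(X)` (written diagrammatically). -/
structure TransfData (F G : TwoFunctorData C D) where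
  app : ∀ a : C, F.obj a ⟶ G.obj a
  natur : ∀ {a b : C} (X : a ⟶ b), F.map X ≫ app b ⟶ app a ≫ G.map X

/-- `φ` is a *-2-transformation: each `φ_X` is unitary, natural in `X`, and coherent
with the tensorators and unitors of `F` and `G`. -/
def IsStarTwoTransf {F G : TwoFunctorData C D} (φ : TransfData F G) : Prop :=
  (∀ {a b : C} (X : a ⟶ b), IsUnitary (φ.natur X)) ∧
  (∀ {a b : C} {X Y : a ⟶ b} (f : X ⟶ Y),
      (F.map2 f ▷ φ.app b) ≫ φ.natur Y = φ.natur X ≫ (φ.app a ◁ G.map2 f)) ∧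
  (∀ {a b c : C} (X : a ⟶ b) (Y : b ⟶ c),
      (F.tensorator X Y ▷ φ.app c) ≫ φ.natur (X ≫ Y)
        = (α_ (F.map X) (F.map Y) (φ.app c)).hom ≫ (F.map X ◁ φ.natur Y)
          ≫ (α_ (F.map X) (φ.app b) (G.map Y)).inv ≫ (φ.natur X ▷ G.map Y)
          ≫ (α_ (φ.app a) (G.map X) (G.map Y)).hom ≫ (φ.app a ◁ G.tensorator X Y)) ∧
  (∀ a : C,
      (F.unitor a ▷ φ.app a) ≫ φ.natur (𝟙 a)
        = (λ_ (φ.app a)).hom ≫ (ρ_ (φ.app a)).inv ≫ (φ.app a ◁ G.unitor a))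

/-- The data of a 2-modification: a family of 2-cells `η_a : φ_a ⟶ ψ_a`. -/
abbrev ModifData {F G : TwoFunctorData C D} (φ ψ : TransfData F G) :=
  ∀ a : C, φ.app a ⟶ ψ.app a

/-- `η` is a 2-modification `φ ⇛ ψ`: uniformly bounded components intertwining the
half-braidings `φ_X`, `ψ_X`. -/
def IsModification {F G : TwoFunctorData C D} (φ ψ : TransfData F G)
    (η : ModifData φ ψ) : Prop :=
  (∃ M : ℝ, ∀ a : C, norm2 (η a) ≤ M) ∧
  (∀ {a b : C} (X : a ⟶ b),
      (F.map X ◁ η b) ≫ ψ.natur X = φ.natur X ≫ (η a ▷ G.map X))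

/-- Horizontal composition of 2-transformations (the tensor product `ψ ⊗ φ` of
1-cells of `Fun(C,D)`, written diagrammatically). -/
def hcompT {F G H : TwoFunctorData C D} (φ : TransfData F G) (χ : TransfData G H) :
    TransfData F H where
  app a := φ.app a ≫ χ.app a
  natur {a b} X :=
    (α_ (F.map X) (φ.app b) (χ.app b)).inv ≫ (φ.natur X ▷ χ.app b)
      ≫ (α_ (φ.app a) (G.map X) (χ.app b)).hom ≫ (φ.app a ◁ χ.natur X)
      ≫ (α_ (φ.app a) (χ.app a) (H.map X)).inv

/-- The identity 2-transformation `1_F`. -/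
def idT (F : TwoFunctorData C D) : TransfData F F where
  app a := 𝟙 (F.obj a)
  natur {a b} X := (ρ_ (F.map X)).hom ≫ (λ_ (F.map X)).inv

/-- A Q-system in `End(F) ⊆ Fun(C,D)`: a *-2-transformation `ψ : F ⇒ F` with
multiplication and unit 2-modifications whose components form Q-systems in `D`. -/
def IsFunQSystem (F : TwoFunctorData C D) (ψ : TransfData F F)
    (m : ModifData (hcompT ψ ψ) ψ) (i : ModifData (idT F) ψ) : Prop :=
  IsStarTwoTransf ψ ∧ IsModification (hcompT ψ ψ) ψ m ∧ IsModification (idT F) ψ i ∧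
  ∀ a : C, IsQSystem (ψ.app a) (m a) (i a)

/-- A Q-system `(ψ, m, i)` in `End(F)` splits in `Fun(C,D)`: there are a *-2-functor `G`,
*-2-transformations `φ : F ⇒ G`, `φ̄ : G ⇒ F` forming a unitarily separable dual pair
(with evaluation and coevaluation 2-modifications), and a unitary 2-modification
`γ : φ̄ ⊗ φ ⇛ ψ` which is an isomorphism of Q-systems. -/
def FunQSystemSplits (F : TwoFunctorData C D) (ψ : TransfData F F)
    (m : ModifData (hcompT ψ ψ) ψ) (i : ModifData (idT F) ψ) : Prop :=
  ∃ (G : TwoFunctorData C D), IsStarTwoFunctor G ∧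
  ∃ (φ : TransfData F G) (φb : TransfData G F),
    IsStarTwoTransf φ ∧ IsStarTwoTransf φb ∧
  ∃ (ev : ∀ a : C, φb.app a ≫ φ.app a ⟶ 𝟙 (G.obj a))
    (coev : ∀ a : C, 𝟙 (F.obj a) ⟶ φ.app a ≫ φb.app a),
    IsModification (hcompT φb φ) (idT G) ev ∧
    IsModification (idT F) (hcompT φ φb) coev ∧
    (∀ a : C, IsUnitarySepDual (φ.app a) (φb.app a) (ev a) (coev a)) ∧
    ∃ (γ : ∀ a : C, φ.app a ≫ φb.app a ⟶ ψ.app a),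
      IsModification (hcompT φ φb) ψ γ ∧
      ∀ a : C, IsQSysIso (dualMult (φ.app a) (φb.app a) (ev a)) (coev a)
        (m a) (i a) (γ a)

end Fun

/-- The C*-2-category `Fun(C,D)` is Q-system complete: every Q-system in it splits. -/
def FunQSystemComplete (C : Type u₁) (D : Type u₂)
    [Bicategory.{w₁, v₁} C] [Bicategory.Strict C] [CStarStruct C]
    [Bicategory.{w₂, v₂} D] [Bicategory.Strict D] [CStarStruct D] : Prop :=
  ∀ (F : TwoFunctorData C D), IsStarTwoFunctor F →
  ∀ (ψ : TransfData F F) (m : ModifData (hcompT ψ ψ) ψ) (i : ModifData (idT F) ψ),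
    IsFunQSystem F ψ m i → FunQSystemSplits F ψ m i

/-- The C*-2-category `Fun(C,D)` is locally orthogonal projection complete: every
projection 2-modification splits by an isometric 2-modification. -/
def FunLocProjComplete (C : Type u₁) (D : Type u₂)
    [Bicategory.{w₁, v₁} C] [Bicategory.Strict C] [CStarStruct C]
    [Bicategory.{w₂, v₂} D] [Bicategory.Strict D] [CStarStruct D] : Prop :=
  ∀ (F G : TwoFunctorData C D), IsStarTwoFunctor F → IsStarTwoFunctor G →
  ∀ (φ : TransfData F G), IsStarTwoTransf φ →
  ∀ (p : ModifData φ φ), IsModification φ φ p → (∀ a : C, IsProjection (p a)) →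
  ∃ (χ : TransfData F G), IsStarTwoTransf χ ∧
  ∃ (v : ModifData χ φ), IsModification χ φ v ∧
    (∀ a : C, v a ≫ star2 (v a) = 𝟙 (χ.app a)) ∧ (∀ a : C, star2 (v a) ≫ v a = p a)


/-!
Each `x_X` is the compression `s ≫ φ_X ≫ t*` of the unitary `φ_X` by the isometries
`s = F(X) ◁ ι_b` and `t = ι_a ▷ G(X)`. Since `p` is a modification, `φ_X` carries the range
projection `s* s = F(X) ◁ p_b` of `s` to the range projection `t* t = p_a ▷ G(X)` of `t`, so
the compression is again unitary, and `ι`, `ι*` intertwine `x_X` with `φ_X`. Every coherence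
axiom for `x` then follows from the one for `φ` by sliding `ι` and `ι*` through it.
-/

section Isometry

variable {B : Type u₁} [Bicategory.{w₁, v₁} B] [CStarStruct B] {a b : B} {f g : a ⟶ b}

lemma norm2_le_one_of_isometry (v : f ⟶ g) (hv : v ≫ star2 v = 𝟙 f) : norm2 v ≤ 1 := by
  have hv2 : norm2 (𝟙 f) = norm2 v * norm2 v := by
    rw [← hv]; exact CStarStruct.nrm_cstar v
  have hid : norm2 (𝟙 f) = norm2 (𝟙 f) * norm2 (𝟙 f) := by
    simpa only [CStarStruct.star_id, Category.comp_id] using CStarStruct.nrm_cstar (𝟙 f)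
  have hsq : norm2 v * norm2 v ≤ 1 := by
    rw [hv2] at hid
    nlinarith [mul_self_nonneg (norm2 v)]
  nlinarith [CStarStruct.nrm_nonneg v]

lemma norm2_star_le_one_of_isometry (v : f ⟶ g) (hv : v ≫ star2 v = 𝟙 f) :
    norm2 (star2 v) ≤ 1 :=
  (CStarStruct.nrm_star v).trans_le (norm2_le_one_of_isometry v hv)

end Isometry

section Compression

variable {B : Type u₁} [Bicategory.{w₁, v₁} B] [CStarStruct B] {a b : B}
  {f f' g g' : a ⟶ b} {u : f ⟶ g} {s : f' ⟶ f} {t : g' ⟶ g}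

lemma comp_eq_compress_comp (hs : s ≫ star2 s = 𝟙 f')
    (hu : (star2 s ≫ s) ≫ u = u ≫ star2 t ≫ t) : s ≫ u = (s ≫ u ≫ star2 t) ≫ t := by
  rw [Category.assoc, Category.assoc, ← hu, Category.assoc, reassoc_of% hs]

lemma star_comp_compress_eq (ht : t ≫ star2 t = 𝟙 g')
    (hu : (star2 s ≫ s) ≫ u = u ≫ star2 t ≫ t) : star2 s ≫ s ≫ u ≫ star2 t = u ≫ star2 t := by
  rw [← Category.assoc, ← Category.assoc, hu]
  simp only [Category.assoc, ht, Category.comp_id]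

lemma isUnitary_compress (hu_unit : IsUnitary u) (hs : s ≫ star2 s = 𝟙 f')
    (ht : t ≫ star2 t = 𝟙 g') (hu : (star2 s ≫ s) ≫ u = u ≫ star2 t ≫ t) :
    IsUnitary (s ≫ u ≫ star2 t) := by
  have hstar : star2 (s ≫ u ≫ star2 t) = t ≫ star2 u ≫ star2 s := by
    simp only [CStarStruct.star_comp, CStarStruct.star_star, Category.assoc]
  constructor
  · calc (s ≫ u ≫ star2 t) ≫ star2 (s ≫ u ≫ star2 t)
        = (s ≫ u) ≫ star2 u ≫ star2 s := by
          rw [hstar, comp_eq_compress_comp hs hu]; simp only [Category.assoc]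
      _ = 𝟙 f' := by rw [Category.assoc, reassoc_of% hu_unit.1, hs]
  · calc star2 (s ≫ u ≫ star2 t) ≫ s ≫ u ≫ star2 t
        = t ≫ star2 u ≫ (star2 s ≫ s ≫ u ≫ star2 t) := by
          rw [hstar]; simp only [Category.assoc]
      _ = 𝟙 g' := by rw [star_comp_compress_eq ht hu, reassoc_of% hu_unit.2, ht]

end Compression

section Whiskering

variable {B : Type u₁} [Bicategory.{w₁, v₁} B] [CStarStruct B] {a b c : B}

lemma whiskerLeft_isometry (h : a ⟶ b) {f g : b ⟶ c} {v : f ⟶ g} (hv : v ≫ star2 v = 𝟙 f) :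
    (h ◁ v) ≫ star2 (h ◁ v) = 𝟙 (h ≫ f) := by
  simp only [CStarStruct.star_whiskerLeft, ← whiskerLeft_comp, hv, whiskerLeft_id]

lemma whiskerRight_isometry {f g : a ⟶ b} {v : f ⟶ g} (hv : v ≫ star2 v = 𝟙 f) (h : b ⟶ c) :
    (v ▷ h) ≫ star2 (v ▷ h) = 𝟙 (f ≫ h) := by
  simp only [CStarStruct.star_whiskerRight, ← comp_whiskerRight, hv, id_whiskerRight]

end Whiskering

namespace TransfData

variable {C : Type u₁} {D : Type u₂}
variable [Bicategory.{w₁, v₁} C] [Bicategory.Strict C]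
variable [Bicategory.{w₂, v₂} D] [Bicategory.Strict D] [CStarStruct D]
variable {F G : TwoFunctorData C D}

-- Reducible, so that `(φ.compress x ι).app a` and `x a` are interchangeable in `calc` steps.
abbrev compress (φ : TransfData F G) (x : ∀ a : C, F.obj a ⟶ G.obj a)
    (ι : ∀ a : C, x a ⟶ φ.app a) : TransfData F G where
  app := x
  natur {a b} X := (F.map X ◁ ι b) ≫ φ.natur X ≫ (star2 (ι a) ▷ G.map X)

variable {φ : TransfData F G} {x : ∀ a : C, F.obj a ⟶ G.obj a} {ι : ∀ a : C, x a ⟶ φ.app a}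
  {p : ModifData φ φ}

lemma compress_natur_eq {a b : C} (X : a ⟶ b) :
    (φ.compress x ι).natur X = (F.map X ◁ ι b) ≫ φ.natur X ≫ star2 (ι a ▷ G.map X) := by
  simp only [compress, CStarStruct.star_whiskerRight]

lemma natur_intertwines_range (hι_proj : ∀ a : C, star2 (ι a) ≫ ι a = p a)
    (hp : IsModification φ φ p) {a b : C} (X : a ⟶ b) :
    (star2 (F.map X ◁ ι b) ≫ (F.map X ◁ ι b)) ≫ φ.natur X
      = φ.natur X ≫ star2 (ι a ▷ G.map X) ≫ (ι a ▷ G.map X) := by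
  simp only [CStarStruct.star_whiskerLeft, CStarStruct.star_whiskerRight, ← whiskerLeft_comp,
    ← comp_whiskerRight, hι_proj, hp.2]

lemma isUnitary_compress_natur (hφ : IsStarTwoTransf φ)
    (hι_isom : ∀ a : C, ι a ≫ star2 (ι a) = 𝟙 (x a))
    (hι_proj : ∀ a : C, star2 (ι a) ≫ ι a = p a) (hp : IsModification φ φ p)
    {a b : C} (X : a ⟶ b) : IsUnitary ((φ.compress x ι).natur X) := by
  rw [compress_natur_eq]
  exact isUnitary_compress (hφ.1 X) (whiskerLeft_isometry _ (hι_isom b))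
    (whiskerRight_isometry (hι_isom a) _) (natur_intertwines_range hι_proj hp X)

lemma whiskerLeft_iota_comp_natur (hι_isom : ∀ a : C, ι a ≫ star2 (ι a) = 𝟙 (x a))
    (hι_proj : ∀ a : C, star2 (ι a) ≫ ι a = p a) (hp : IsModification φ φ p)
    {a b : C} (X : a ⟶ b) :
    (F.map X ◁ ι b) ≫ φ.natur X = (φ.compress x ι).natur X ≫ (ι a ▷ G.map X) := by
  rw [compress_natur_eq]
  exact comp_eq_compress_comp (whiskerLeft_isometry _ (hι_isom b))
    (natur_intertwines_range hι_proj hp X)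

lemma whiskerLeft_star_iota_compress_natur (hι_isom : ∀ a : C, ι a ≫ star2 (ι a) = 𝟙 (x a))
    (hι_proj : ∀ a : C, star2 (ι a) ≫ ι a = p a) (hp : IsModification φ φ p)
    {a b : C} (X : a ⟶ b) :
    (F.map X ◁ star2 (ι b)) ≫ (φ.compress x ι).natur X
      = φ.natur X ≫ (star2 (ι a) ▷ G.map X) := by
  have h := star_comp_compress_eq (whiskerRight_isometry (hι_isom a) (G.map X))
    (natur_intertwines_range hι_proj hp X)
  simpa only [CStarStruct.star_whiskerLeft, CStarStruct.star_whiskerRight, compress] using h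

lemma compress_naturality (hφ : IsStarTwoTransf φ) {a b : C} {X Y : a ⟶ b} (f : X ⟶ Y) :
    (F.map2 f ▷ x b) ≫ (φ.compress x ι).natur Y
      = (φ.compress x ι).natur X ≫ (x a ◁ G.map2 f) := by
  simp only [compress, Category.assoc]
  rw [← whisker_exchange_assoc, reassoc_of% (hφ.2.1 f), whisker_exchange]

lemma compress_unitor (hφ : IsStarTwoTransf φ)
    (hι_isom : ∀ a : C, ι a ≫ star2 (ι a) = 𝟙 (x a)) (a : C) :
    (F.unitor a ▷ x a) ≫ (φ.compress x ι).natur (𝟙 a)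
      = (λ_ (x a)).hom ≫ (ρ_ (x a)).inv ≫ (x a ◁ G.unitor a) := by
  simp only [compress]
  rw [← whisker_exchange_assoc, reassoc_of% (hφ.2.2.2 a), whisker_exchange,
    leftUnitor_naturality_assoc, ← rightUnitor_inv_naturality_assoc, reassoc_of% (hι_isom a)]

lemma compress_tensorator (hφ : IsStarTwoTransf φ)
    (hι_isom : ∀ a : C, ι a ≫ star2 (ι a) = 𝟙 (x a))
    (hι_proj : ∀ a : C, star2 (ι a) ≫ ι a = p a) (hp : IsModification φ φ p)
    {a b c : C} (X : a ⟶ b) (Y : b ⟶ c) :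
    (F.tensorator X Y ▷ x c) ≫ (φ.compress x ι).natur (X ≫ Y)
      = (α_ (F.map X) (F.map Y) (x c)).hom ≫ (F.map X ◁ (φ.compress x ι).natur Y)
        ≫ (α_ (F.map X) (x b) (G.map Y)).inv ≫ ((φ.compress x ι).natur X ▷ G.map Y)
        ≫ (α_ (x a) (G.map X) (G.map Y)).hom ≫ (x a ◁ G.tensorator X Y) := by
  calc (F.tensorator X Y ▷ x c) ≫ (φ.compress x ι).natur (X ≫ Y)
      = ((F.map X ≫ F.map Y) ◁ ι c) ≫ (F.tensorator X Y ▷ φ.app c) ≫ φ.natur (X ≫ Y)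
          ≫ (star2 (ι a) ▷ G.map (X ≫ Y)) := by
        simp only [compress]; rw [whisker_exchange_assoc]
    _ = ((F.map X ≫ F.map Y) ◁ ι c) ≫ (α_ (F.map X) (F.map Y) (φ.app c)).hom
          ≫ (F.map X ◁ φ.natur Y) ≫ (α_ (F.map X) (φ.app b) (G.map Y)).inv
          ≫ ((φ.natur X ≫ (star2 (ι a) ▷ G.map X)) ▷ G.map Y)
          ≫ (α_ (x a) (G.map X) (G.map Y)).hom ≫ (x a ◁ G.tensorator X Y) := by
        rw [reassoc_of% (hφ.2.2.1 X Y), whisker_exchange]; bicategory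
    _ = ((F.map X ≫ F.map Y) ◁ ι c) ≫ (α_ (F.map X) (F.map Y) (φ.app c)).hom
          ≫ (F.map X ◁ φ.natur Y) ≫ (α_ (F.map X) (φ.app b) (G.map Y)).inv
          ≫ (((F.map X ◁ star2 (ι b)) ≫ (φ.compress x ι).natur X) ▷ G.map Y)
          ≫ (α_ (x a) (G.map X) (G.map Y)).hom ≫ (x a ◁ G.tensorator X Y) := by
        rw [whiskerLeft_star_iota_compress_natur hι_isom hι_proj hp]
    _ = _ := by simp only [compress]; bicategory

lemma isStarTwoTransf_compress (hφ : IsStarTwoTransf φ)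
    (hι_isom : ∀ a : C, ι a ≫ star2 (ι a) = 𝟙 (x a))
    (hι_proj : ∀ a : C, star2 (ι a) ≫ ι a = p a) (hp : IsModification φ φ p) :
    IsStarTwoTransf (φ.compress x ι) :=
  ⟨isUnitary_compress_natur hφ hι_isom hι_proj hp, compress_naturality hφ,
    compress_tensorator hφ hι_isom hι_proj hp, compress_unitor hφ hι_isom⟩

lemma isModification_compress_iota (hι_isom : ∀ a : C, ι a ≫ star2 (ι a) = 𝟙 (x a))
    (hι_proj : ∀ a : C, star2 (ι a) ≫ ι a = p a) (hp : IsModification φ φ p) :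
    IsModification (φ.compress x ι) φ ι :=
  ⟨⟨1, fun a => norm2_le_one_of_isometry (ι a) (hι_isom a)⟩,
    whiskerLeft_iota_comp_natur hι_isom hι_proj hp⟩

lemma isModification_star_iota (hι_isom : ∀ a : C, ι a ≫ star2 (ι a) = 𝟙 (x a))
    (hι_proj : ∀ a : C, star2 (ι a) ≫ ι a = p a) (hp : IsModification φ φ p) :
    IsModification φ (φ.compress x ι) (fun a => star2 (ι a)) :=
  ⟨⟨1, fun a => norm2_star_le_one_of_isometry (ι a) (hι_isom a)⟩,
    whiskerLeft_star_iota_compress_natur hι_isom hι_proj hp⟩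

end TransfData

lemma funLocProjComplete_of_locProjComplete (C : Type u₁) {D : Type u₂}
    [Bicategory.{w₁, v₁} C] [Bicategory.Strict C] [CStarStruct C]
    [Bicategory.{w₂, v₂} D] [Bicategory.Strict D] [CStarStruct D]
    (hD : LocProjComplete D) : FunLocProjComplete C D := by
  intro F G _ _ φ hφ p hp hproj
  choose x ι hι_isom hι_proj using fun a => hD (φ.app a) (p a) (hproj a)
  exact ⟨φ.compress x ι, TransfData.isStarTwoTransf_compress hφ hι_isom hι_proj hp, ι,
    TransfData.isModification_compress_iota hι_isom hι_proj hp, hι_isom, hι_proj⟩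

theorem funCD_locProjComplete_general
    (C : Type u₁) (D : Type u₂)
    [Bicategory.{w₁, v₁} C] [Bicategory.Strict C] [CStarStruct C]
    [Bicategory.{w₂, v₂} D] [Bicategory.Strict D] [CStarStruct D]
    (hD : LocProjComplete D)
    (F G : TwoFunctorData C D)
    (φ : TransfData F G) (hφ : IsStarTwoTransf φ)
    (p : ModifData φ φ) (hp : IsModification φ φ p)
    (x : ∀ a : C, F.obj a ⟶ G.obj a)
    (ι : ∀ a : C, x a ⟶ φ.app a)
    (hι_isom : ∀ a : C, ι a ≫ star2 (ι a) = 𝟙 (x a))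
    (hι_proj : ∀ a : C, star2 (ι a) ≫ ι a = p a) :
    FunLocProjComplete C D ∧
    (∀ {a b : C} (X : a ⟶ b),
        IsUnitary ((F.map X ◁ ι b) ≫ φ.natur X ≫ (star2 (ι a) ▷ G.map X))) ∧
    IsStarTwoTransf
      ({ app := x,
         natur := fun {a b} X =>
           (F.map X ◁ ι b) ≫ φ.natur X ≫ (star2 (ι a) ▷ G.map X) } :
        TransfData F G) ∧
    IsModification
      ({ app := x,
         natur := fun {a b} X =>
           (F.map X ◁ ι b) ≫ φ.natur X ≫ (star2 (ι a) ▷ G.map X) } :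
        TransfData F G) φ ι ∧
    IsModification φ
      ({ app := x,
         natur := fun {a b} X =>
           (F.map X ◁ ι b) ≫ φ.natur X ≫ (star2 (ι a) ▷ G.map X) } :
        TransfData F G) (fun a => star2 (ι a)) :=
  ⟨funLocProjComplete_of_locProjComplete C hD,
    TransfData.isUnitary_compress_natur hφ hι_isom hι_proj hp,
    TransfData.isStarTwoTransf_compress hφ hι_isom hι_proj hp,
    TransfData.isModification_compress_iota hι_isom hι_proj hp,
    TransfData.isModification_star_iota hι_isom hι_proj hp⟩

/-- If `D` is locally orthogonal projection complete then so is
`Fun(C, D)`.  More precisely: given *-2-functors `F`, `G`, a *-2-transformation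
`φ : F ⇒ G` and a projection 2-modification `p : φ ⇛ φ`, and choices of 1-cells
`x_a` and isometries `ι_a : x_a ⟶ φ_a` with `ι_a* ι_a = id` and `ι_a ι_a* = p_a`,
the family `x_X := (id ⊠ ι_a*) ∘ φ_X ∘ (ι_b ⊠ id)` consists of unitaries, `x`
is a *-2-transformation `F ⇒ G`, and `ι` is a 2-modification `x ⇛ φ` with
`ι ∘ ι* = p` and `ι* ∘ ι = id_x`. -/
theorem funCD_locProjComplete
    (C : Type u₁) (D : Type u₂)
    [Bicategory.{w₁, v₁} C] [Bicategory.Strict C] [CStarStruct C]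
    [Bicategory.{w₂, v₂} D] [Bicategory.Strict D] [CStarStruct D]
    (hD : LocProjComplete D)
    (F G : TwoFunctorData C D) (hF : IsStarTwoFunctor F) (hG : IsStarTwoFunctor G)
    (φ : TransfData F G) (hφ : IsStarTwoTransf φ)
    (p : ModifData φ φ) (hp : IsModification φ φ p)
    (hproj : ∀ a : C, IsProjection (p a))
    (x : ∀ a : C, F.obj a ⟶ G.obj a)
    (ι : ∀ a : C, x a ⟶ φ.app a)
    (hι_isom : ∀ a : C, ι a ≫ star2 (ι a) = 𝟙 (x a))
    (hι_proj : ∀ a : C, star2 (ι a) ≫ ι a = p a) :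
    FunLocProjComplete C D ∧
    (∀ {a b : C} (X : a ⟶ b),
        IsUnitary ((F.map X ◁ ι b) ≫ φ.natur X ≫ (star2 (ι a) ▷ G.map X))) ∧
    IsStarTwoTransf
      ({ app := x,
         natur := fun {a b} X =>
           (F.map X ◁ ι b) ≫ φ.natur X ≫ (star2 (ι a) ▷ G.map X) } :
        TransfData F G) ∧
    IsModification
      ({ app := x,
         natur := fun {a b} X =>
           (F.map X ◁ ι b) ≫ φ.natur X ≫ (star2 (ι a) ▷ G.map X) } :
        TransfData F G) φ ι ∧
    IsModification φ
      ({ app := x,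
         natur := fun {a b} X =>
           (F.map X ◁ ι b) ≫ φ.natur X ≫ (star2 (ι a) ▷ G.map X) } :
        TransfData F G) (fun a => star2 (ι a)) :=
  funCD_locProjComplete_general C D hD F G φ hφ p hp x ι hι_isom hι_proj
end

section
/- In the standing setup, for every 2-cell f ∈ C₂(X,Y) between 1-cells X, Y ∈ C₁(a,b) one has (id_{x_b} ⊠ F(f) ⊠ id_{x̄_a}) ∘ p_X = p_Y ∘ (id_{x_b} ⊠ F(f) ⊠ id_{x̄_a}), i.e. the projections p_X are natural in X. -/
/-!
Self-contained background for formalizing results from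
"Q-system completion of C*-2-categories of 2-functors".

We model a strict C*-2-category as a (Mathlib) bicategory which is `Bicategory.Strict`,
together with a `CStarStruct`: a star operation and a norm on 2-cells, compatible with
the vertical composition and the horizontal whiskerings.
-/

open CategoryTheory CategoryTheory.Bicategory

universe w₁ v₁ u₁ w₂ v₂ u₂

/-! ### The standing setup

`C`, `D` are strict C*-2-categories, `D` is Q-system complete, `F : C → D` is a
*-2-functor and `(ψ, m, i)` is a Q-system in `End_{Fun(C,D)}(F)`; for each 0-cell `a`
of `C` we fix a splitting of the Q-system `ψ_a` in `D`: a 0-cell `c_a`, a 1-cell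
`x_a : F(a) ⟶ c_a` with unitarily separable dual `x̄_a`, evaluation `ε_a`,
coevaluation `η_a`, and a unitary `γ⁽ᵃ⁾ : x̄_a ⊠ x_a ⟶ ψ_a` intertwining the
multiplications and units. -/
structure Setup (C : Type u₁) (D : Type u₂)
    [Bicategory.{w₁, v₁} C] [Bicategory.Strict C] [CStarStruct C]
    [Bicategory.{w₂, v₂} D] [Bicategory.Strict D] [CStarStruct D] where
  locC : LocProjComplete C
  locD : LocProjComplete D
  complD : QSystemComplete D
  F : TwoFunctorData C D
  hF : IsStarTwoFunctor F
  ψ : TransfData F F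
  hψ : IsStarTwoTransf ψ
  m : ModifData (hcompT ψ ψ) ψ
  i : ModifData (idT F) ψ
  hm : IsModification (hcompT ψ ψ) ψ m
  hi : IsModification (idT F) ψ i
  hQ : ∀ a : C, IsQSystem (ψ.app a) (m a) (i a)
  cc : C → D
  x : ∀ a : C, F.obj a ⟶ cc a
  xb : ∀ a : C, cc a ⟶ F.obj a
  eps : ∀ a : C, xb a ≫ x a ⟶ 𝟙 (cc a)
  η : ∀ a : C, 𝟙 (F.obj a) ⟶ x a ≫ xb a
  hdual : ∀ a : C, IsUnitarySepDual (x a) (xb a) (eps a) (η a)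
  γ : ∀ a : C, x a ≫ xb a ⟶ ψ.app a
  hγu : ∀ a : C, IsUnitary (γ a)
  hγm : ∀ a : C,
    dualMult (x a) (xb a) (eps a) ≫ γ a
      = ((γ a ▷ (x a ≫ xb a)) ≫ (ψ.app a ◁ γ a)) ≫ m a
  hγi : ∀ a : C, η a ≫ γ a = i a

namespace Setup

variable {C : Type u₁} {D : Type u₂}
variable [Bicategory.{w₁, v₁} C] [Bicategory.Strict C] [CStarStruct C]
variable [Bicategory.{w₂, v₂} D] [Bicategory.Strict D] [CStarStruct D]

/-- The 2-cell `p_X ∈ End(x_b ⊠ F(X) ⊠ x̄_a)`, namely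
`(ε_b ⊠ id) ∘ (id ⊠ γ⁽ᵇ⁾* ⊠ id) ∘ (id ⊠ ψ_X* ⊠ id) ∘ (id ⊠ γ⁽ᵃ⁾ ⊠ id) ∘ (id ⊠ ε_a*)`. -/
def p (S : Setup C D) {a b : C} (X : a ⟶ b) :
    S.xb a ≫ S.F.map X ≫ S.x b ⟶ S.xb a ≫ S.F.map X ≫ S.x b :=
  (λ_ (S.xb a ≫ S.F.map X ≫ S.x b)).inv
    ≫ (star2 (S.eps a) ▷ (S.xb a ≫ S.F.map X ≫ S.x b))
    ≫ (α_ (S.xb a) (S.x a) (S.xb a ≫ S.F.map X ≫ S.x b)).hom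
    ≫ (S.xb a ◁ (α_ (S.x a) (S.xb a) (S.F.map X ≫ S.x b)).inv)
    ≫ (S.xb a ◁ (S.γ a ▷ (S.F.map X ≫ S.x b)))
    ≫ (S.xb a ◁ (α_ (S.ψ.app a) (S.F.map X) (S.x b)).inv)
    ≫ (S.xb a ◁ (star2 (S.ψ.natur X) ▷ S.x b))
    ≫ (S.xb a ◁ (α_ (S.F.map X) (S.ψ.app b) (S.x b)).hom)
    ≫ (S.xb a ◁ (S.F.map X ◁ (star2 (S.γ b) ▷ S.x b)))
    ≫ (S.xb a ◁ (S.F.map X ◁ (α_ (S.x b) (S.xb b) (S.x b)).hom))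
    ≫ (S.xb a ◁ (S.F.map X ◁ (S.x b ◁ S.eps b)))
    ≫ (S.xb a ◁ (S.F.map X ◁ (ρ_ (S.x b)).hom))

/-- The 2-cell `p_{X,Y} ∈ End(x_b ⊠ F(X) ⊠ F(Y) ⊠ x̄_c)` obtained like `p_X` but
passing `ψ` through both `F(X)` and `F(Y)`. -/
def p2 (S : Setup C D) {a b c : C} (X : a ⟶ b) (Y : b ⟶ c) :
    S.xb a ≫ S.F.map X ≫ S.F.map Y ≫ S.x c
      ⟶ S.xb a ≫ S.F.map X ≫ S.F.map Y ≫ S.x c :=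
  (λ_ (S.xb a ≫ S.F.map X ≫ S.F.map Y ≫ S.x c)).inv
    ≫ (star2 (S.eps a) ▷ (S.xb a ≫ S.F.map X ≫ S.F.map Y ≫ S.x c))
    ≫ (α_ (S.xb a) (S.x a) (S.xb a ≫ S.F.map X ≫ S.F.map Y ≫ S.x c)).hom
    ≫ (S.xb a ◁ (α_ (S.x a) (S.xb a) (S.F.map X ≫ S.F.map Y ≫ S.x c)).inv)
    ≫ (S.xb a ◁ (S.γ a ▷ (S.F.map X ≫ S.F.map Y ≫ S.x c)))
    ≫ (S.xb a ◁ (α_ (S.ψ.app a) (S.F.map X) (S.F.map Y ≫ S.x c)).inv)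
    ≫ (S.xb a ◁ (star2 (S.ψ.natur X) ▷ (S.F.map Y ≫ S.x c)))
    ≫ (S.xb a ◁ (α_ (S.F.map X) (S.ψ.app b) (S.F.map Y ≫ S.x c)).hom)
    ≫ (S.xb a ◁ (S.F.map X ◁ (α_ (S.ψ.app b) (S.F.map Y) (S.x c)).inv))
    ≫ (S.xb a ◁ (S.F.map X ◁ (star2 (S.ψ.natur Y) ▷ S.x c)))
    ≫ (S.xb a ◁ (S.F.map X ◁ (α_ (S.F.map Y) (S.ψ.app c) (S.x c)).hom))
    ≫ (S.xb a ◁ (S.F.map X ◁ (S.F.map Y ◁ (star2 (S.γ c) ▷ S.x c))))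
    ≫ (S.xb a ◁ (S.F.map X ◁ (S.F.map Y ◁ (α_ (S.x c) (S.xb c) (S.x c)).hom)))
    ≫ (S.xb a ◁ (S.F.map X ◁ (S.F.map Y ◁ (S.x c ◁ S.eps c))))
    ≫ (S.xb a ◁ (S.F.map X ◁ (S.F.map Y ◁ (ρ_ (S.x c)).hom)))

end Setup

/-- A choice, for every 1-cell `X` of `C`, of a splitting `u_X : G(X) ⟶ x_b ⊠ F(X) ⊠ x̄_a`
of the projection `p_X` (possible since `D` is locally orthogonal projection complete),
normalized on identity 1-cells as in the paper: `G(1_a) = 1_{c_a}` and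
`u_{1_a} = (id ⊠ F¹_a ⊠ id) ∘ ε_a*`. -/
structure GData {C : Type u₁} {D : Type u₂}
    [Bicategory.{w₁, v₁} C] [Bicategory.Strict C] [CStarStruct C]
    [Bicategory.{w₂, v₂} D] [Bicategory.Strict D] [CStarStruct D]
    (S : Setup C D) where
  G1 : ∀ {a b : C}, (a ⟶ b) → (S.cc a ⟶ S.cc b)
  u : ∀ {a b : C} (X : a ⟶ b), G1 X ⟶ S.xb a ≫ S.F.map X ≫ S.x b
  hu_isometry : ∀ {a b : C} (X : a ⟶ b), u X ≫ star2 (u X) = 𝟙 (G1 X)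
  hu_proj : ∀ {a b : C} (X : a ⟶ b), star2 (u X) ≫ u X = S.p X
  hG1_id : ∀ a : C, G1 (𝟙 a) = 𝟙 (S.cc a)
  hu_id : ∀ a : C,
    u (𝟙 a) = eqToHom (hG1_id a) ≫ star2 (S.eps a)
      ≫ (S.xb a ◁ ((λ_ (S.x a)).inv ≫ (S.F.unitor a ▷ S.x a)))

namespace GData

variable {C : Type u₁} {D : Type u₂}
variable [Bicategory.{w₁, v₁} C] [Bicategory.Strict C] [CStarStruct C]
variable [Bicategory.{w₂, v₂} D] [Bicategory.Strict D] [CStarStruct D]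
variable {S : Setup C D}

/-- `G` on 2-cells: `G(f) := u_Y* ∘ (id ⊠ F(f) ⊠ id) ∘ u_X`. -/
def Gmap2 (E : GData S) {a b : C} {X Y : a ⟶ b} (f : X ⟶ Y) : E.G1 X ⟶ E.G1 Y :=
  E.u X ≫ (S.xb a ◁ (S.F.map2 f ▷ S.x b)) ≫ star2 (E.u Y)

/-- The tensorator of `G`:
`G²_{X,Y} := u_{X⊠Y}* ∘ (id ⊠ F² ⊠ id) ∘ (id ⊠ η* ⊠ id) ∘ (u_X ⊠ u_Y)`. -/
def Gtensor (E : GData S) {a b c : C} (X : a ⟶ b) (Y : b ⟶ c) :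
    E.G1 X ≫ E.G1 Y ⟶ E.G1 (X ≫ Y) :=
  (E.u X ▷ E.G1 Y)
    ≫ ((S.xb a ≫ S.F.map X ≫ S.x b) ◁ E.u Y)
    ≫ (α_ (S.xb a) (S.F.map X ≫ S.x b) (S.xb b ≫ S.F.map Y ≫ S.x c)).hom
    ≫ (S.xb a ◁ (α_ (S.F.map X) (S.x b) (S.xb b ≫ S.F.map Y ≫ S.x c)).hom)
    ≫ (S.xb a ◁ (S.F.map X ◁ (α_ (S.x b) (S.xb b) (S.F.map Y ≫ S.x c)).inv))
    ≫ (S.xb a ◁ (S.F.map X ◁ (star2 (S.η b) ▷ (S.F.map Y ≫ S.x c))))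
    ≫ (S.xb a ◁ (S.F.map X ◁ (λ_ (S.F.map Y ≫ S.x c)).hom))
    ≫ (S.xb a ◁ (α_ (S.F.map X) (S.F.map Y) (S.x c)).inv)
    ≫ (S.xb a ◁ (S.F.tensorator X Y ▷ S.x c))
    ≫ star2 (E.u (X ≫ Y))

/-- The full 2-functor data of `G`. -/
def toFunctor (E : GData S) : TwoFunctorData C D where
  obj a := S.cc a
  map X := E.G1 X
  map2 f := E.Gmap2 f
  tensorator X Y := E.Gtensor X Y
  unitor a := eqToHom (E.hG1_id a).symm

/-- The components of the 2-transformation `φ : F ⇒ G`: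
`φ_X := (u_X* ⊠ id_{x_a}) ∘ (id ⊠ η_a)`. -/
def φnat (E : GData S) {a b : C} (X : a ⟶ b) :
    S.F.map X ≫ S.x b ⟶ S.x a ≫ E.G1 X :=
  (λ_ (S.F.map X ≫ S.x b)).inv
    ≫ (S.η a ▷ (S.F.map X ≫ S.x b))
    ≫ (α_ (S.x a) (S.xb a) (S.F.map X ≫ S.x b)).hom
    ≫ (S.x a ◁ star2 (E.u X))

/-- The components of the 2-transformation `φ̄ : G ⇒ F`:
`φ̄_X := (η_b* ⊠ id) ∘ (id_{x̄_b} ⊠ u_X)`. -/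
def φbnat (E : GData S) {a b : C} (X : a ⟶ b) :
    E.G1 X ≫ S.xb b ⟶ S.xb a ≫ S.F.map X :=
  (E.u X ▷ S.xb b)
    ≫ (α_ (S.xb a) (S.F.map X ≫ S.x b) (S.xb b)).hom
    ≫ (S.xb a ◁ (α_ (S.F.map X) (S.x b) (S.xb b)).hom)
    ≫ (S.xb a ◁ (S.F.map X ◁ star2 (S.η b)))
    ≫ (S.xb a ◁ (ρ_ (S.F.map X)).hom)

/-- The 2-transformation `φ : F ⇒ G`, with `φ_a := x_a`. -/
def φT (E : GData S) : TransfData S.F E.toFunctor where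
  app a := S.x a
  natur {a b} X := E.φnat X

/-- The 2-transformation `φ̄ : G ⇒ F`, with `φ̄_a := x̄_a`. -/
def φbT (E : GData S) : TransfData E.toFunctor S.F where
  app a := S.xb a
  natur {a b} X := E.φbnat X

end GData

/-!
`p_X` factors as the coaction `x̄_a → x̄_a ⊠ ψ_a` (built from `ε_a*` and `γ⁽ᵃ⁾`), followed by
the action of `ψ_a` on `F(X) ⊠ x_b` obtained by transporting the action of `ψ_b` on `x_b`
along `ψ_X*`. Unitarity of `ψ_X` turns the naturality of `ψ_X` into that of `ψ_X*`, and the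
interchange law slides `F(f)` past everything else.
-/

theorem star_comp_eq_comp_star_of_comm {B : Type u₁} [Bicategory.{w₁, v₁} B] [CStarStruct B]
    {a b : B} {P Q P' Q' : a ⟶ b}
    {u : P ⟶ Q} {v : P' ⟶ Q'} {α : P ⟶ P'} {β : Q ⟶ Q'}
    (hu : star2 u ≫ u = 𝟙 Q) (hv : v ≫ star2 v = 𝟙 P') (h : α ≫ v = u ≫ β) :
    star2 u ≫ α = β ≫ star2 v :=
  calc star2 u ≫ α = star2 u ≫ α ≫ v ≫ star2 v := by rw [hv, Category.comp_id]
    _ = (star2 u ≫ u) ≫ β ≫ star2 v := by rw [reassoc_of% h, Category.assoc]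
    _ = β ≫ star2 v := by rw [hu, Category.id_comp]

theorem IsStarTwoTransf.star_natur_naturality {C : Type u₁} {D : Type u₂}
    [Bicategory.{w₁, v₁} C] [Bicategory.Strict C] [CStarStruct C]
    [Bicategory.{w₂, v₂} D] [Bicategory.Strict D] [CStarStruct D]
    {F G : TwoFunctorData C D} {φ : TransfData F G} (hφ : IsStarTwoTransf φ)
    {a b : C} {X Y : a ⟶ b} (f : X ⟶ Y) :
    star2 (φ.natur X) ≫ (F.map2 f ▷ φ.app b) = (φ.app a ◁ G.map2 f) ≫ star2 (φ.natur Y) :=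
  star_comp_eq_comp_star_of_comm (hφ.1 X).2 (hφ.1 Y).1 (hφ.2.1 f)

namespace Setup

variable {C : Type u₁} {D : Type u₂}
variable [Bicategory.{w₁, v₁} C] [Bicategory.Strict C] [CStarStruct C]
variable [Bicategory.{w₂, v₂} D] [Bicategory.Strict D] [CStarStruct D]
variable (S : Setup C D)

def coactXb (a : C) : S.xb a ⟶ S.xb a ≫ S.ψ.app a :=
  (λ_ (S.xb a)).inv ≫ (star2 (S.eps a) ▷ S.xb a) ≫ (α_ _ _ _).hom ≫ (S.xb a ◁ S.γ a)

def actX (b : C) : S.ψ.app b ≫ S.x b ⟶ S.x b :=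
  (star2 (S.γ b) ▷ S.x b) ≫ (α_ _ _ _).hom ≫ (S.x b ◁ S.eps b) ≫ (ρ_ (S.x b)).hom

def actThrough {a b : C} (X : a ⟶ b) : S.ψ.app a ≫ S.F.map X ≫ S.x b ⟶ S.F.map X ≫ S.x b :=
  (α_ _ _ _).inv ≫ (star2 (S.ψ.natur X) ▷ S.x b) ≫ (α_ _ _ _).hom ≫ (S.F.map X ◁ S.actX b)

theorem p_eq {a b : C} (X : a ⟶ b) :
    S.p X = (S.coactXb a ▷ (S.F.map X ≫ S.x b)) ≫ (α_ _ _ _).hom ≫ (S.xb a ◁ S.actThrough X) := by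
  simp only [p, coactXb, actX, actThrough]
  bicategory

theorem actThrough_naturality {a b : C} {X Y : a ⟶ b} (f : X ⟶ Y) :
    S.actThrough X ≫ (S.F.map2 f ▷ S.x b)
      = (S.ψ.app a ◁ (S.F.map2 f ▷ S.x b)) ≫ S.actThrough Y := by
  have key := S.hψ.star_natur_naturality f
  simp only [actThrough, Category.assoc]
  rw [whisker_exchange, ← associator_naturality_left_assoc, ← comp_whiskerRight_assoc, key,
    comp_whiskerRight_assoc, associator_inv_naturality_middle_assoc]

end Setup

/-- In the standing setup, the projections `p_X` are natural in `X`: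
for every 2-cell `f : X ⟶ Y`,
`(id ⊠ F(f) ⊠ id) ∘ p_X = p_Y ∘ (id ⊠ F(f) ⊠ id)`. -/
theorem pX_natural
    {C : Type u₁} {D : Type u₂}
    [Bicategory.{w₁, v₁} C] [Bicategory.Strict C] [CStarStruct C]
    [Bicategory.{w₂, v₂} D] [Bicategory.Strict D] [CStarStruct D]
    (S : Setup C D) {a b : C} {X Y : a ⟶ b} (f : X ⟶ Y) :
    S.p X ≫ (S.xb a ◁ (S.F.map2 f ▷ S.x b))
      = (S.xb a ◁ (S.F.map2 f ▷ S.x b)) ≫ S.p Y := by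
  rw [S.p_eq, S.p_eq]
  simp only [Category.assoc, ← whiskerLeft_comp, S.actThrough_naturality]
  rw [whiskerLeft_comp, ← associator_naturality_right_assoc, whisker_exchange_assoc]
end

section
/- In the standing setup with G, u_X, φ and φ̄ as defined, for every 1-cell X ∈ C₁(a,b) the 2-cells φ_X : x_b ⊠ F(X) → G(X) ⊠ x_a and φ̄_X : x̄_b ⊠ G(X) → F(X) ⊠ x̄_a are unitary. -/
/-!
Self-contained background for formalizing results from
"Q-system completion of C*-2-categories of 2-functors".

We model a strict C*-2-category as a (Mathlib) bicategory which is `Bicategory.Strict`,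
together with a `CStarStruct`: a star operation and a norm on 2-cells, compatible with
the vertical composition and the horizontal whiskerings.
-/

open CategoryTheory CategoryTheory.Bicategory

universe w₁ v₁ u₁ w₂ v₂ u₂

/-!
Put `M := F(X) ≫ x_b` (diagrammatic order; unitors and associators suppressed). Through
`γ_b*` and `ε_b` the 1-cell `x_b` is a left `ψ_b`-module, and pulling the action back along
`ψ_X*` makes `M` a left `ψ_a`-module with action `r`. Conjugation by `γ_a` turns `x_a ◁ p_X`
into the projection `P = (m_a* ▷ M) ≫ (ψ_a ◁ r)` of the free module `ψ_a ≫ M`, so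
`w = (x_a ◁ u_X) ≫ (γ_a ▷ M)` satisfies `w ≫ w* = 1`, `w* ≫ w = P` and `φ_X = (i_a ▷ M) ≫ w*`.
Unitality of `r` and the unit law of `ψ_a` give `φ_X ≫ φ_X* = 1`; associativity of `r`, the
Frobenius relation and the unit law give `P ≫ ((i_a* ≫ i_a) ▷ M) ≫ P = P`, whence
`φ_X* ≫ φ_X = w ≫ ((i_a* ≫ i_a) ▷ M) ≫ w* = 1`. In the mirror image, `x̄_a ≫ F(X)` is a right
`ψ_b`-comodule and the same argument shows that `φ̄_X` is unitary.
-/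

section StarLemmas

variable {B : Type u₁} [Bicategory.{w₁, v₁} B] [CStarStruct B]

@[simp] lemma star2_comp {a b : B} {f g h : a ⟶ b} (η : f ⟶ g) (θ : g ⟶ h) :
    star2 (η ≫ θ) = star2 θ ≫ star2 η := CStarStruct.star_comp η θ

@[simp] lemma star2_star2 {a b : B} {f g : a ⟶ b} (η : f ⟶ g) :
    star2 (star2 η) = η := CStarStruct.star_star η

@[simp] lemma star2_id {a b : B} (f : a ⟶ b) : star2 (𝟙 f) = 𝟙 f :=
  CStarStruct.star_id f

@[simp] lemma star2_whiskerLeft {a b c : B} (f : a ⟶ b) {g h : b ⟶ c} (η : g ⟶ h) :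
    star2 (f ◁ η) = f ◁ star2 η := CStarStruct.star_whiskerLeft f η

@[simp] lemma star2_whiskerRight {a b c : B} {f g : a ⟶ b} (η : f ⟶ g) (h : b ⟶ c) :
    star2 (η ▷ h) = star2 η ▷ h := CStarStruct.star_whiskerRight η h

namespace IsQSysIso

variable {e : B} {P Q : e ⟶ e} {mP : P ≫ P ⟶ P} {iP : 𝟙 e ⟶ P} {mQ : Q ≫ Q ⟶ Q}
  {iQ : 𝟙 e ⟶ Q} {γ : P ⟶ Q}

lemma mul_eq (hγ : IsQSysIso mP iP mQ iQ γ) :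
    mQ = (Q ◁ star2 γ) ≫ (star2 γ ▷ P) ≫ mP ≫ γ := by
  rw [hγ.2.1, Category.assoc, ← comp_whiskerRight_assoc, hγ.1.2, id_whiskerRight,
    Category.id_comp, ← whiskerLeft_comp_assoc, hγ.1.2, whiskerLeft_id, Category.id_comp]

lemma unit_comp_star (hγ : IsQSysIso mP iP mQ iQ γ) : iQ ≫ star2 γ = iP := by
  rw [← hγ.2.2, Category.assoc, hγ.1.1, Category.comp_id]

end IsQSysIso

variable [Bicategory.Strict B]

@[simp] lemma star2_eqToHom {a b : B} {f g : a ⟶ b} (h : f = g) :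
    star2 (eqToHom h) = eqToHom h.symm := by subst h; simp

@[simp] lemma star2_associator_hom {a b c d : B} (f : a ⟶ b) (g : b ⟶ c) (h : c ⟶ d) :
    star2 (α_ f g h).hom = (α_ f g h).inv := by
  simp [Bicategory.Strict.associator_eqToIso]

@[simp] lemma star2_associator_inv {a b c d : B} (f : a ⟶ b) (g : b ⟶ c) (h : c ⟶ d) :
    star2 (α_ f g h).inv = (α_ f g h).hom := by
  simp [Bicategory.Strict.associator_eqToIso]

@[simp] lemma star2_leftUnitor_hom {a b : B} (f : a ⟶ b) :
    star2 (λ_ f).hom = (λ_ f).inv := by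
  simp [Bicategory.Strict.leftUnitor_eqToIso]

@[simp] lemma star2_leftUnitor_inv {a b : B} (f : a ⟶ b) :
    star2 (λ_ f).inv = (λ_ f).hom := by
  simp [Bicategory.Strict.leftUnitor_eqToIso]

@[simp] lemma star2_rightUnitor_hom {a b : B} (f : a ⟶ b) :
    star2 (ρ_ f).hom = (ρ_ f).inv := by
  simp [Bicategory.Strict.rightUnitor_eqToIso]

@[simp] lemma star2_rightUnitor_inv {a b : B} (f : a ⟶ b) :
    star2 (ρ_ f).inv = (ρ_ f).hom := by
  simp [Bicategory.Strict.rightUnitor_eqToIso]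

end StarLemmas

lemma comp_comp_eq_id_of_splitting {W : Type*} [Category W] {P Q : W}
    (w : P ⟶ Q) (w' : Q ⟶ P) {N p : Q ⟶ Q}
    (hww' : w ≫ w' = 𝟙 P) (hw'w : w' ≫ w = p) (hp : p ≫ N ≫ p = p) :
    w ≫ N ≫ w' = 𝟙 P :=
  calc w ≫ N ≫ w' = (w ≫ w') ≫ w ≫ N ≫ w' ≫ (w ≫ w') := by simp [hww']
    _ = w ≫ (w' ≫ w) ≫ N ≫ (w' ≫ w) ≫ w' := by simp only [Category.assoc]
    _ = w ≫ w' ≫ w ≫ w' := by rw [hw'w, reassoc_of% hp, ← hw'w, Category.assoc]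
    _ = 𝟙 P := by rw [reassoc_of% hww', hww']

section StrictCStar

variable {B : Type u₁} [Bicategory.{w₁, v₁} B] [Bicategory.Strict B] [CStarStruct B]

namespace IsQSystem

variable {e : B} {Q : e ⟶ e} {m : Q ≫ Q ⟶ Q} {i : 𝟙 e ⟶ Q}

lemma star_mul_comp_star_unit_whiskerRight (hQ : IsQSystem Q m i) :
    star2 m ≫ (star2 i ▷ Q) = (λ_ Q).inv := by
  simpa using congrArg star2 hQ.2.1

lemma star_mul_comp_whiskerLeft_star_unit (hQ : IsQSystem Q m i) :
    star2 m ≫ (Q ◁ star2 i) = (ρ_ Q).inv := by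
  simpa using congrArg star2 hQ.2.2.1

end IsQSystem

section Modules

variable {e c : B} {Q : e ⟶ e} {m : Q ≫ Q ⟶ Q} {i : 𝟙 e ⟶ Q}

variable (m i) in
def IsLeftModule {M : e ⟶ c} (r : Q ≫ M ⟶ M) : Prop :=
  (Q ◁ r) ≫ r = (α_ Q Q M).inv ≫ (m ▷ M) ≫ r ∧ (i ▷ M) ≫ r = (λ_ M).hom

variable (m i) in
def IsRightComodule {M : c ⟶ e} (δ : M ⟶ M ≫ Q) : Prop :=
  δ ≫ (δ ▷ Q) ≫ (α_ M Q Q).hom = δ ≫ (M ◁ star2 m) ∧ δ ≫ (M ◁ star2 i) = (ρ_ M).inv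

variable (m) in
def leftModuleProj {M : e ⟶ c} (r : Q ≫ M ⟶ M) : Q ≫ M ⟶ Q ≫ M :=
  (star2 m ▷ M) ≫ (α_ Q Q M).hom ≫ (Q ◁ r)

variable (m) in
def rightComoduleProj {M : c ⟶ e} (δ : M ⟶ M ≫ Q) : M ≫ Q ⟶ M ≫ Q :=
  (δ ▷ Q) ≫ (α_ M Q Q).hom ≫ (M ◁ m)

section LeftModule

variable {M : e ⟶ c} {r : Q ≫ M ⟶ M}

lemma leftModuleProj_unit_conj (hQ : IsQSystem Q m i) (hr : IsLeftModule m i r) :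
    (λ_ M).inv ≫ (i ▷ M) ≫ leftModuleProj m r ≫ (star2 i ▷ M) ≫ (λ_ M).hom = 𝟙 M :=
  calc _ = (λ_ M).inv ≫ (i ▷ M) ≫ (star2 m ▷ M) ≫ (α_ Q Q M).hom
          ≫ (star2 i ▷ (Q ≫ M)) ≫ (𝟙 e ◁ r) ≫ (λ_ M).hom := by
        simp only [leftModuleProj, Category.assoc, whisker_exchange_assoc]
    _ = (λ_ M).inv ≫ (i ▷ M) ⊗≫ ((star2 m ≫ (star2 i ▷ Q)) ▷ M) ⊗≫ r := by bicategory
    _ = (λ_ M).inv ≫ ((i ▷ M) ≫ r) := by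
        rw [hQ.star_mul_comp_star_unit_whiskerRight]; bicategory
    _ = 𝟙 M := by rw [hr.2]; simp

lemma leftModuleProj_comp_comp_leftModuleProj (hQ : IsQSystem Q m i)
    (hr : IsLeftModule m i r) :
    leftModuleProj m r ≫ ((star2 i ≫ i) ▷ M) ≫ leftModuleProj m r = leftModuleProj m r := by
  have ⟨_, hunit, _, hfrob, _⟩ := hQ
  calc _ = (star2 m ▷ M) ⊗≫ (((star2 i ≫ i) ▷ Q) ▷ M) ⊗≫ (star2 m ▷ (Q ≫ M))
          ⊗≫ (Q ◁ ((Q ◁ r) ≫ r)) := by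
        simp only [leftModuleProj, Category.assoc]
        rw [whisker_exchange_assoc, whisker_exchange_assoc]
        bicategory
    _ = ((star2 m ≫ ((star2 i ≫ i) ▷ Q) ≫ (star2 m ▷ Q) ≫ (α_ Q Q Q).hom ≫ (Q ◁ m)) ▷ M)
          ⊗≫ (Q ◁ r) := by rw [hr.1]; bicategory
    _ = ((star2 m ≫ (star2 i ▷ Q)) ≫ ((i ▷ Q) ≫ m) ≫ star2 m) ▷ M ⊗≫ (Q ◁ r) := by
        rw [← hfrob]; simp
    _ = leftModuleProj m r := by
        rw [hQ.star_mul_comp_star_unit_whiskerRight, hunit, leftModuleProj]; bicategory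

theorem isUnitary_of_star_comp_eq_leftModuleProj (hQ : IsQSystem Q m i)
    (hr : IsLeftModule m i r) {N : e ⟶ c} (w : N ⟶ Q ≫ M) (hw : w ≫ star2 w = 𝟙 N)
    (hw' : star2 w ≫ w = leftModuleProj m r) :
    IsUnitary ((λ_ M).inv ≫ (i ▷ M) ≫ star2 w) := by
  constructor
  · simpa [reassoc_of% hw'] using leftModuleProj_unit_conj hQ hr
  · simpa using comp_comp_eq_id_of_splitting w (star2 w) hw hw'
      (leftModuleProj_comp_comp_leftModuleProj hQ hr)

end LeftModule

section RightComodule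

variable {M : c ⟶ e} {δ : M ⟶ M ≫ Q}

lemma rightComoduleProj_unit_conj (hQ : IsQSystem Q m i) (hδ : IsRightComodule m i δ) :
    (ρ_ M).inv ≫ (M ◁ i) ≫ rightComoduleProj m δ ≫ (M ◁ star2 i) ≫ (ρ_ M).hom = 𝟙 M := by
  have ⟨_, _, hunit, _⟩ := hQ
  calc _ = (ρ_ M).inv ≫ (δ ▷ 𝟙 e) ≫ ((M ≫ Q) ◁ i) ≫ (α_ M Q Q).hom ≫ (M ◁ m)
          ≫ (M ◁ star2 i) ≫ (ρ_ M).hom := by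
        simp only [rightComoduleProj, Category.assoc, whisker_exchange_assoc]
    _ = δ ⊗≫ (M ◁ (((Q ◁ i) ≫ m) ≫ star2 i)) ⊗≫ 𝟙 M := by bicategory
    _ = (δ ≫ (M ◁ star2 i)) ≫ (ρ_ M).hom := by rw [hunit]; bicategory
    _ = 𝟙 M := by rw [hδ.2]; simp

lemma rightComoduleProj_comp_comp_rightComoduleProj (hQ : IsQSystem Q m i)
    (hδ : IsRightComodule m i δ) :
    rightComoduleProj m δ ≫ (M ◁ (star2 i ≫ i)) ≫ rightComoduleProj m δ
      = rightComoduleProj m δ := by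
  have ⟨_, _, hunit, hfrob, _⟩ := hQ
  calc _ = ((δ ≫ (δ ▷ Q) ≫ (α_ M Q Q).hom) ▷ Q)
          ⊗≫ (M ◁ ((Q ◁ (m ≫ star2 i ≫ i)) ≫ m)) := by
        simp only [rightComoduleProj, Category.assoc]
        rw [← Bicategory.whiskerLeft_comp_assoc, whisker_exchange_assoc]
        bicategory
    _ = (δ ▷ Q) ⊗≫ (M ◁ ((star2 m ▷ Q) ≫ (α_ Q Q Q).hom ≫ (Q ◁ m)
          ≫ (Q ◁ star2 i) ≫ (Q ◁ i) ≫ m)) := by rw [hδ.1]; bicategory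
    _ = (δ ▷ Q) ⊗≫ (M ◁ (m ≫ (star2 m ≫ (Q ◁ star2 i)) ≫ ((Q ◁ i) ≫ m))) := by
        rw [← reassoc_of% hfrob]; simp
    _ = rightComoduleProj m δ := by
        rw [hQ.star_mul_comp_whiskerLeft_star_unit, hunit, rightComoduleProj]; bicategory

theorem isUnitary_of_star_comp_eq_rightComoduleProj (hQ : IsQSystem Q m i)
    (hδ : IsRightComodule m i δ) {N : c ⟶ e} (w : N ⟶ M ≫ Q) (hw : w ≫ star2 w = 𝟙 N)
    (hw' : star2 w ≫ w = rightComoduleProj m δ) :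
    IsUnitary (w ≫ (M ◁ star2 i) ≫ (ρ_ M).hom) := by
  constructor
  · simpa using comp_comp_eq_id_of_splitting w (star2 w) hw hw'
      (rightComoduleProj_comp_comp_rightComoduleProj hQ hδ)
  · simpa [reassoc_of% hw'] using rightComoduleProj_unit_conj hQ hδ

end RightComodule

end Modules

section Splitting

variable {e c : B} {Q : e ⟶ e} {m : Q ≫ Q ⟶ Q} {i : 𝟙 e ⟶ Q} {x : e ⟶ c} {xb : c ⟶ e}
  {eps : xb ≫ x ⟶ 𝟙 c} {η : 𝟙 e ⟶ x ≫ xb} {γ : x ≫ xb ⟶ Q}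

variable (x xb eps γ) in
def splitAction : Q ≫ x ⟶ x :=
  (star2 γ ▷ x) ≫ (α_ x xb x).hom ≫ (x ◁ eps) ≫ (ρ_ x).hom

variable (x xb eps γ) in
def splitCoaction : xb ⟶ xb ≫ Q :=
  (λ_ xb).inv ≫ (star2 eps ▷ xb) ≫ (α_ xb x xb).hom ≫ (xb ◁ γ)

lemma mul_eq_splitAction (hγ : IsQSysIso (dualMult x xb eps) η m i γ) :
    (Q ◁ star2 γ) ≫ (α_ Q x xb).inv ≫ (splitAction x xb eps γ ▷ xb) ≫ γ = m := by
  conv_rhs => rw [hγ.mul_eq]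
  simp only [splitAction, dualMult]
  bicategory

lemma star_mul_eq_splitCoaction (hγ : IsQSysIso (dualMult x xb eps) η m i γ) :
    star2 γ ≫ (x ◁ splitCoaction x xb eps γ) ≫ (α_ x xb Q).inv ≫ (γ ▷ Q) = star2 m := by
  conv_rhs => rw [hγ.mul_eq]
  calc _ = star2 γ ≫ (x ◁ ((λ_ xb).inv ≫ (star2 eps ▷ xb) ≫ (α_ xb x xb).hom))
        ≫ (α_ x xb (x ≫ xb)).inv ≫ ((x ≫ xb) ◁ γ) ≫ (γ ▷ Q) := by
        simp only [splitCoaction]; bicategory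
    _ = _ := by rw [whisker_exchange]; simp [dualMult]

lemma whiskerRight_comp_splitAction (hγ : IsQSysIso (dualMult x xb eps) η m i γ) :
    (γ ▷ x) ≫ splitAction x xb eps γ = (α_ x xb x).hom ≫ (x ◁ eps) ≫ (ρ_ x).hom := by
  rw [splitAction, ← comp_whiskerRight_assoc, hγ.1.1, id_whiskerRight, Category.id_comp]

lemma splitCoaction_comp_whiskerLeft_star (hγ : IsQSysIso (dualMult x xb eps) η m i γ) :
    splitCoaction x xb eps γ ≫ (xb ◁ star2 γ)
      = (λ_ xb).inv ≫ (star2 eps ▷ xb) ≫ (α_ xb x xb).hom := by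
  simp only [splitCoaction, Category.assoc, ← whiskerLeft_comp, hγ.1.1, whiskerLeft_id,
    Category.comp_id]

lemma isLeftModule_splitAction (hdual : IsUnitarySepDual x xb eps η)
    (hγ : IsQSysIso (dualMult x xb eps) η m i γ) :
    IsLeftModule m i (splitAction x xb eps γ) := by
  constructor
  · symm
    calc _ = (α_ Q Q x).inv ≫ ((Q ◁ star2 γ) ▷ x) ≫ ((α_ Q x xb).inv ▷ x)
          ≫ (splitAction x xb eps γ ▷ xb ▷ x) ≫ (α_ x xb x).hom ≫ (x ◁ eps)
          ≫ (ρ_ x).hom := by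
          rw [← mul_eq_splitAction hγ]
          simp only [comp_whiskerRight, Category.assoc, whiskerRight_comp_splitAction hγ]
      _ = (Q ◁ (star2 γ ▷ x)) ⊗≫ ((splitAction x xb eps γ ▷ (xb ≫ x)) ≫ (x ◁ eps))
          ⊗≫ 𝟙 x := by bicategory
      _ = _ := by rw [← whisker_exchange]; simp only [splitAction]; bicategory
  · rw [← hγ.2.2, comp_whiskerRight_assoc, whiskerRight_comp_splitAction hγ]
    simpa using (λ_ x).hom ≫= hdual.1

lemma isRightComodule_splitCoaction (hdual : IsUnitarySepDual x xb eps η)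
    (hγ : IsQSysIso (dualMult x xb eps) η m i γ) :
    IsRightComodule m i (splitCoaction x xb eps γ) := by
  constructor
  · symm
    calc _ = (λ_ xb).inv ≫ (star2 eps ▷ xb) ≫ (α_ xb x xb).hom
          ≫ (xb ◁ (x ◁ splitCoaction x xb eps γ)) ≫ (xb ◁ (α_ x xb Q).inv)
          ≫ (xb ◁ (γ ▷ Q)) := by
          rw [← star_mul_eq_splitCoaction hγ]
          simp only [whiskerLeft_comp, reassoc_of% splitCoaction_comp_whiskerLeft_star hγ]
      _ = (λ_ xb).inv ⊗≫ ((star2 eps ▷ xb) ≫ ((xb ≫ x) ◁ splitCoaction x xb eps γ))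
          ⊗≫ (xb ◁ (γ ▷ Q)) := by bicategory
      _ = _ := by rw [← whisker_exchange]; simp only [splitCoaction]; bicategory
  · rw [← hγ.2.2, star2_comp, whiskerLeft_comp,
      reassoc_of% splitCoaction_comp_whiskerLeft_star hγ]
    simpa using congrArg star2 hdual.2.1 =≫ (ρ_ xb).inv

end Splitting

section SplitUnitary

variable {e c c' : B} {Q : e ⟶ e} {m : Q ≫ Q ⟶ Q} {i : 𝟙 e ⟶ Q} {x : e ⟶ c} {xb : c ⟶ e}
  {eps : xb ≫ x ⟶ 𝟙 c} {η : 𝟙 e ⟶ x ≫ xb} {γ : x ≫ xb ⟶ Q}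

theorem isUnitary_of_star_comp_eq_splitCoaction (hQ : IsQSystem Q m i)
    (hγ : IsQSysIso (dualMult x xb eps) η m i γ) {M : e ⟶ c'} {r : Q ≫ M ⟶ M}
    (hr : IsLeftModule m i r) {N : c ⟶ c'} (u : N ⟶ xb ≫ M) (hu : u ≫ star2 u = 𝟙 N)
    (hp : star2 u ≫ u = (splitCoaction x xb eps γ ▷ M) ≫ (α_ xb Q M).hom ≫ (xb ◁ r)) :
    IsUnitary ((λ_ M).inv ≫ (η ▷ M) ≫ (α_ x xb M).hom ≫ (x ◁ star2 u)) := by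
  let w := (x ◁ u) ≫ (α_ x xb M).inv ≫ (γ ▷ M)
  have hww : w ≫ star2 w = 𝟙 (x ≫ N) := by
    simp [w, ← comp_whiskerRight_assoc, hγ.1.1, ← whiskerLeft_comp, hu]
  have hw'w : star2 w ≫ w = leftModuleProj m r :=
    calc star2 w ≫ w = (star2 γ ▷ M) ≫ (α_ x xb M).hom ≫ (x ◁ (star2 u ≫ u))
          ≫ (α_ x xb M).inv ≫ (γ ▷ M) := by simp [w]
      _ = (star2 γ ▷ M) ⊗≫ (x ◁ splitCoaction x xb eps γ ▷ M)
          ⊗≫ (((x ≫ xb) ◁ r) ≫ (γ ▷ M)) := by rw [hp]; bicategory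
      _ = ((star2 γ ≫ (x ◁ splitCoaction x xb eps γ) ≫ (α_ x xb Q).inv ≫ (γ ▷ Q)) ▷ M)
          ⊗≫ (Q ◁ r) := by rw [whisker_exchange]; bicategory
      _ = leftModuleProj m r := by
          rw [star_mul_eq_splitCoaction hγ, leftModuleProj]; bicategory
  have hφ : (λ_ M).inv ≫ (η ▷ M) ≫ (α_ x xb M).hom ≫ (x ◁ star2 u)
      = (λ_ M).inv ≫ (i ▷ M) ≫ star2 w := by
    simp [w, ← hγ.unit_comp_star]
  rw [hφ]
  exact isUnitary_of_star_comp_eq_leftModuleProj hQ hr w hww hw'w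

theorem isUnitary_of_star_comp_eq_splitAction (hQ : IsQSystem Q m i)
    (hγ : IsQSysIso (dualMult x xb eps) η m i γ) {M : c' ⟶ e} {δ : M ⟶ M ≫ Q}
    (hδ : IsRightComodule m i δ) {N : c' ⟶ c} (u : N ⟶ M ≫ x) (hu : u ≫ star2 u = 𝟙 N)
    (hp : star2 u ≫ u = (δ ▷ x) ≫ (α_ M Q x).hom ≫ (M ◁ splitAction x xb eps γ)) :
    IsUnitary ((u ▷ xb) ≫ (α_ M x xb).hom ≫ (M ◁ star2 η) ≫ (ρ_ M).hom) := by
  let v := (u ▷ xb) ≫ (α_ M x xb).hom ≫ (M ◁ γ)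
  have hvv : v ≫ star2 v = 𝟙 (N ≫ xb) := by
    simp [v, ← whiskerLeft_comp_assoc, hγ.1.1, ← comp_whiskerRight, hu]
  have hv'v : star2 v ≫ v = rightComoduleProj m δ :=
    calc star2 v ≫ v = (M ◁ star2 γ) ≫ (α_ M x xb).inv ≫ ((star2 u ≫ u) ▷ xb)
          ≫ (α_ M x xb).hom ≫ (M ◁ γ) := by simp [v]
      _ = ((M ◁ star2 γ) ≫ (δ ▷ (x ≫ xb))) ⊗≫ (M ◁ splitAction x xb eps γ ▷ xb)
          ⊗≫ (M ◁ γ) := by rw [hp]; bicategory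
      _ = (δ ▷ Q) ⊗≫ (M ◁ ((Q ◁ star2 γ) ≫ (α_ Q x xb).inv
          ≫ (splitAction x xb eps γ ▷ xb) ≫ γ)) := by rw [whisker_exchange]; bicategory
      _ = rightComoduleProj m δ := by
          rw [mul_eq_splitAction hγ, rightComoduleProj]; bicategory
  have hφ : (u ▷ xb) ≫ (α_ M x xb).hom ≫ (M ◁ star2 η) ≫ (ρ_ M).hom
      = v ≫ (M ◁ star2 i) ≫ (ρ_ M).hom := by
    simp [v, ← hγ.unit_comp_star]
  rw [hφ]
  exact isUnitary_of_star_comp_eq_rightComoduleProj hQ hδ v hvv hv'v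

end SplitUnitary

section Transport

variable {e e' c : B} {Q : e ⟶ e} {m : Q ≫ Q ⟶ Q} {i : 𝟙 e ⟶ Q}
  {Q' : e' ⟶ e'} {m' : Q' ≫ Q' ⟶ Q'} {i' : 𝟙 e' ⟶ Q'} {Y : e ⟶ e'} {h : Y ≫ Q' ⟶ Q ≫ Y}

variable (m i m' i') in
/-- The conditions saying that `m` and `i` are 2-modifications, at a component `h = ψ_X`. -/
def IsQSystemHalfBraiding (h : Y ≫ Q' ⟶ Q ≫ Y) : Prop :=
  (Y ◁ m') ≫ h = ((α_ Y Q' Q').inv ≫ (h ▷ Q') ≫ (α_ Q Y Q').hom ≫ (Q ◁ h)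
      ≫ (α_ Q Q Y).inv) ≫ (m ▷ Y) ∧
  (Y ◁ i') ≫ h = ((ρ_ Y).hom ≫ (λ_ Y).inv) ≫ (i ▷ Y)

def transportAction (h : Y ≫ Q' ⟶ Q ≫ Y) {M : e' ⟶ c} (r : Q' ≫ M ⟶ M) :
    Q ≫ Y ≫ M ⟶ Y ≫ M :=
  (α_ Q Y M).inv ≫ (star2 h ▷ M) ≫ (α_ Y Q' M).hom ≫ (Y ◁ r)

def transportCoaction {M : c ⟶ e} (δ : M ⟶ M ≫ Q) (h : Y ≫ Q' ⟶ Q ≫ Y) :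
    M ≫ Y ⟶ (M ≫ Y) ≫ Q' :=
  (δ ▷ Y) ≫ (α_ M Q Y).hom ≫ (M ◁ star2 h) ≫ (α_ M Y Q').inv

namespace IsQSystemHalfBraiding

lemma mul_whiskerRight_comp_star (hh : IsUnitary h)
    (hb : IsQSystemHalfBraiding m i m' i' h) :
    (m ▷ Y) ≫ star2 h = (α_ Q Q Y).hom ≫ (Q ◁ star2 h) ≫ (α_ Q Y Q').inv
      ≫ (star2 h ▷ Q') ≫ (α_ Y Q' Q').hom ≫ (Y ◁ m') := by
  have hinv : ((α_ Q Q Y).hom ≫ (Q ◁ star2 h) ≫ (α_ Q Y Q').inv ≫ (star2 h ▷ Q')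
      ≫ (α_ Y Q' Q').hom) ≫ (α_ Y Q' Q').inv ≫ (h ▷ Q') ≫ (α_ Q Y Q').hom ≫ (Q ◁ h)
      ≫ (α_ Q Q Y).inv = 𝟙 _ := by
    simp [← comp_whiskerRight_assoc, hh.2, ← whiskerLeft_comp_assoc]
  calc (m ▷ Y) ≫ star2 h = (_ ≫ (α_ Y Q' Q').inv ≫ (h ▷ Q') ≫ (α_ Q Y Q').hom ≫ (Q ◁ h)
        ≫ (α_ Q Q Y).inv) ≫ (m ▷ Y) ≫ star2 h := by rw [hinv, Category.id_comp]
    _ = _ := by simp only [Category.assoc]; rw [← reassoc_of% hb.1, hh.1, Category.comp_id]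

lemma unit_whiskerRight_comp_star (hh : IsUnitary h)
    (hb : IsQSystemHalfBraiding m i m' i' h) :
    (i ▷ Y) ≫ star2 h = (λ_ Y).hom ≫ (ρ_ Y).inv ≫ (Y ◁ i') := by
  calc (i ▷ Y) ≫ star2 h = ((λ_ Y).hom ≫ (ρ_ Y).inv) ≫ ((ρ_ Y).hom ≫ (λ_ Y).inv)
        ≫ (i ▷ Y) ≫ star2 h := by simp
    _ = _ := by simp only [Category.assoc]; rw [← reassoc_of% hb.2, hh.1]; simp

lemma star_comp_whiskerLeft_star_mul (hb : IsQSystemHalfBraiding m i m' i' h) :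
    star2 h ≫ (Y ◁ star2 m') = (star2 m ▷ Y) ≫ (α_ Q Q Y).hom ≫ (Q ◁ star2 h)
      ≫ (α_ Q Y Q').inv ≫ (star2 h ▷ Q') ≫ (α_ Y Q' Q').hom := by
  simpa using congrArg star2 hb.1

lemma star_comp_whiskerLeft_star_unit (hb : IsQSystemHalfBraiding m i m' i' h) :
    star2 h ≫ (Y ◁ star2 i') = (star2 i ▷ Y) ≫ (λ_ Y).hom ≫ (ρ_ Y).inv := by
  simpa using congrArg star2 hb.2

end IsQSystemHalfBraiding

lemma IsLeftModule.transportAction {M : e' ⟶ c} {r : Q' ≫ M ⟶ M} (hr : IsLeftModule m' i' r)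
    (hh : IsUnitary h) (hb : IsQSystemHalfBraiding m i m' i' h) :
    IsLeftModule m i (transportAction h r) := by
  constructor
  · symm
    calc _ = 𝟙 (Q ≫ Q ≫ Y ≫ M) ⊗≫ (((m ▷ Y) ≫ star2 h) ▷ M) ⊗≫ (Y ◁ r) := by
          simp only [_root_.transportAction]; bicategory
      _ = 𝟙 (Q ≫ Q ≫ Y ≫ M) ⊗≫ (Q ◁ (star2 h ▷ M)) ⊗≫ (star2 h ▷ (Q' ≫ M))
          ⊗≫ (Y ◁ ((α_ Q' Q' M).inv ≫ (m' ▷ M) ≫ r)) := by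
          rw [hb.mul_whiskerRight_comp_star hh]; bicategory
      _ = 𝟙 (Q ≫ Q ≫ Y ≫ M) ⊗≫ (Q ◁ (star2 h ▷ M))
          ⊗≫ ((star2 h ▷ (Q' ≫ M)) ≫ ((Y ≫ Q') ◁ r)) ⊗≫ (Y ◁ r) := by
          rw [← hr.1]; bicategory
      _ = _ := by rw [← whisker_exchange]; simp only [_root_.transportAction]; bicategory
  · calc _ = 𝟙 (𝟙 e ≫ Y ≫ M) ⊗≫ (((i ▷ Y) ≫ star2 h) ▷ M) ⊗≫ (Y ◁ r) := by
          simp only [_root_.transportAction]; bicategory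
      _ = 𝟙 (𝟙 e ≫ Y ≫ M) ⊗≫ (Y ◁ ((i' ▷ M) ≫ r)) := by
          rw [hb.unit_whiskerRight_comp_star hh]; bicategory
      _ = _ := by rw [hr.2]; bicategory

lemma IsRightComodule.transportCoaction {M : c ⟶ e} {δ : M ⟶ M ≫ Q}
    (hδ : IsRightComodule m i δ) (hb : IsQSystemHalfBraiding m i m' i' h) :
    IsRightComodule m' i' (transportCoaction δ h) := by
  constructor
  · calc _ = (δ ▷ Y) ⊗≫ ((M ◁ star2 h) ≫ (δ ▷ (Y ≫ Q'))) ⊗≫ (M ◁ (star2 h ▷ Q'))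
          ⊗≫ 𝟙 ((M ≫ Y) ≫ Q' ≫ Q') := by
          simp only [_root_.transportCoaction]; bicategory
      _ = ((δ ≫ (δ ▷ Q) ≫ (α_ M Q Q).hom) ▷ Y)
          ⊗≫ (M ◁ ((Q ◁ star2 h) ⊗≫ (star2 h ▷ Q'))) ⊗≫ 𝟙 ((M ≫ Y) ≫ Q' ≫ Q') := by
          rw [whisker_exchange]; bicategory
      _ = (δ ▷ Y) ⊗≫ (M ◁ ((star2 m ▷ Y) ≫ (α_ Q Q Y).hom ≫ (Q ◁ star2 h)
          ≫ (α_ Q Y Q').inv ≫ (star2 h ▷ Q') ≫ (α_ Y Q' Q').hom)) ⊗≫ 𝟙 _ := by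
          rw [hδ.1]; bicategory
      _ = _ := by
          rw [← hb.star_comp_whiskerLeft_star_mul]
          simp only [_root_.transportCoaction]; bicategory
  · calc _ = (δ ▷ Y) ⊗≫ (M ◁ (star2 h ≫ (Y ◁ star2 i'))) ⊗≫ 𝟙 ((M ≫ Y) ≫ 𝟙 e') := by
          simp only [_root_.transportCoaction]; bicategory
      _ = ((δ ≫ (M ◁ star2 i)) ▷ Y) ⊗≫ 𝟙 ((M ≫ Y) ≫ 𝟙 e') := by
          rw [hb.star_comp_whiskerLeft_star_unit]; bicategory
      _ = _ := by rw [hδ.2]; bicategory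

end Transport

end StrictCStar

namespace Setup

variable {C : Type u₁} {D : Type u₂}
variable [Bicategory.{w₁, v₁} C] [Bicategory.Strict C] [CStarStruct C]
variable [Bicategory.{w₂, v₂} D] [Bicategory.Strict D] [CStarStruct D]
variable (S : Setup C D)

lemma isQSysIso_γ (a : C) :
    IsQSysIso (dualMult (S.x a) (S.xb a) (S.eps a)) (S.η a) (S.m a) (S.i a) (S.γ a) :=
  ⟨S.hγu a, S.hγm a, S.hγi a⟩

lemma isQSystemHalfBraiding_natur {a b : C} (X : a ⟶ b) :
    IsQSystemHalfBraiding (S.m a) (S.i a) (S.m b) (S.i b) (S.ψ.natur X) :=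
  ⟨S.hm.2 X, S.hi.2 X⟩

lemma p_eq_splitCoaction {a b : C} (X : a ⟶ b) :
    S.p X = (splitCoaction (S.x a) (S.xb a) (S.eps a) (S.γ a) ▷ (S.F.map X ≫ S.x b))
      ≫ (α_ (S.xb a) (S.ψ.app a) (S.F.map X ≫ S.x b)).hom
      ≫ (S.xb a ◁ transportAction (S.ψ.natur X)
          (splitAction (S.x b) (S.xb b) (S.eps b) (S.γ b))) := by
  simp only [p, splitCoaction, transportAction, splitAction]
  bicategory

lemma p_eq_splitAction {a b : C} (X : a ⟶ b) :
    (α_ (S.xb a) (S.F.map X) (S.x b)).hom ≫ S.p X ≫ (α_ (S.xb a) (S.F.map X) (S.x b)).inv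
      = (transportCoaction (splitCoaction (S.x a) (S.xb a) (S.eps a) (S.γ a)) (S.ψ.natur X)
          ▷ S.x b)
        ≫ (α_ (S.xb a ≫ S.F.map X) (S.ψ.app b) (S.x b)).hom
        ≫ ((S.xb a ≫ S.F.map X) ◁ splitAction (S.x b) (S.xb b) (S.eps b) (S.γ b)) := by
  simp only [p, splitCoaction, transportCoaction, splitAction]
  bicategory

end Setup

/-- In the standing setup with `G`, `u_X`, `φ` and `φ̄` as defined,
for every 1-cell `X ∈ C₁(a,b)` the 2-cells
`φ_X : x_b ⊠ F(X) ⟶ G(X) ⊠ x_a` and `φ̄_X : x̄_b ⊠ G(X) ⟶ F(X) ⊠ x̄_a`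
are unitary. -/
theorem phi_phibar_unitary
    {C : Type u₁} {D : Type u₂}
    [Bicategory.{w₁, v₁} C] [Bicategory.Strict C] [CStarStruct C]
    [Bicategory.{w₂, v₂} D] [Bicategory.Strict D] [CStarStruct D]
    (S : Setup C D) (E : GData S) {a b : C} (X : a ⟶ b) :
    IsUnitary (E.φnat X) ∧ IsUnitary (E.φbnat X) := by
  have hψ := S.isQSystemHalfBraiding_natur X
  constructor
  · exact isUnitary_of_star_comp_eq_splitCoaction (S.hQ a) (S.isQSysIso_γ a)
      ((isLeftModule_splitAction (S.hdual b) (S.isQSysIso_γ b)).transportAction (S.hψ.1 X) hψ)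
      (E.u X) (E.hu_isometry X) (by rw [E.hu_proj X, S.p_eq_splitCoaction])
  · have h := isUnitary_of_star_comp_eq_splitAction (S.hQ b) (S.isQSysIso_γ b)
      ((isRightComodule_splitCoaction (S.hdual a) (S.isQSysIso_γ a)).transportCoaction hψ)
      (E.u X ≫ (α_ _ _ _).inv) (by simp [E.hu_isometry X])
      (by
        simp only [star2_comp, star2_associator_inv, Category.assoc]
        rw [reassoc_of% E.hu_proj X, S.p_eq_splitAction X])
    convert h using 1
    simp only [GData.φbnat]
    bicategory
end
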